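/- arXiv:1507.02811 — 9 statements merged into one kernel-verified Lean document; each statement's English description precedes it below -/
import Mathlib

section
/- Let R be a commutative ring and G a filter of ideals of R possessing a basis of finitely generated ideals. Then G is a Gabriel topology (i.e., for all I in G and t in R the colon ideal (I : t) is in G, and whenever J is an ideal and I in G satisfies (J : t) in G for all t in I, then J in G) if and only if G is closed under products of ideals. -/
/-!
Products are always in a Gabriel topology: for `t ∈ I` the colon `(I * J : t)` contains `J`.
Conversely, `I ≤ (I : t)` gives the first axiom. For the second, shrink `I` to a finitely
generated `K = (t₁, …, tₙ)` in `G`; then `L = ⋂ᵢ (J : tᵢ)` lies in `G`, and `K * L ≤ J`,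
so `J` lies in `G` once `G` is closed under products.
-/

namespace Ideal

variable {R : Type*} [CommRing R]

lemma mul_colon_le (J K : Ideal R) : K * J.colon K ≤ J :=
  mul_le.2 fun k hk r hr => by
    simpa only [mul_comm, smul_eq_mul] using Submodule.mem_colon.1 hr k hk

lemma finsetInf_colon_span_singleton_le (J : Ideal R) (s : Finset R) :
    s.inf (fun t => J.colon (span {t})) ≤ J.colon (span (s : Set R)) := fun r hr => by
  rw [colon_span, Submodule.mem_colon]
  intro t ht
  have hle : s.inf (fun t => J.colon (span {t})) ≤ J.colon (span {t}) := Finset.inf_le ht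
  exact mem_colon_span_singleton.1 (hle hr)

lemma le_colon_span_singleton_mul {I : Ideal R} {t : R} (ht : t ∈ I) (J : Ideal R) :
    J ≤ (I * J).colon (span {t}) := fun j hj =>
  mem_colon_span_singleton.2 (mul_comm t j ▸ mul_mem_mul ht hj)

end Ideal

open Ideal in
theorem gabriel_iff_closed_under_products_general {R : Type*} [CommRing R]
    (G : Set (Ideal R))
    (hup : ∀ I ∈ G, ∀ J : Ideal R, I ≤ J → J ∈ G)
    (hinter : ∀ I ∈ G, ∀ J ∈ G, I ⊓ J ∈ G)
    (hbasis : ∀ I ∈ G, ∃ J ∈ G, J ≤ I ∧ J.FG) :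
    ((∀ I ∈ G, ∀ t : R, I.colon (Ideal.span {t}) ∈ G) ∧
      (∀ J : Ideal R, ∀ I ∈ G, (∀ t ∈ I, J.colon (Ideal.span {t}) ∈ G) → J ∈ G))
      ↔ (∀ I ∈ G, ∀ J ∈ G, I * J ∈ G) := by
  constructor
  · rintro ⟨-, hcolon⟩ I hI J hJ
    exact hcolon _ I hI fun t ht => hup J hJ _ (le_colon_span_singleton_mul ht J)
  · intro hprod
    refine ⟨fun I hI t => hup I hI _ le_colon, fun J I hI hcolon => ?_⟩
    obtain ⟨K, hK, hKI, s, rfl⟩ := hbasis I hI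
    have hL : s.inf (fun t => J.colon (span {t})) ∈ G :=
      Finset.inf_induction (hup I hI ⊤ le_top) (fun _ h₁ _ h₂ => hinter _ h₁ _ h₂)
        fun t ht => hcolon t (hKI (subset_span ht))
    have hcolonK : J.colon (span (s : Set R)) ∈ G :=
      hup _ hL _ (finsetInf_colon_span_singleton_le J s)
    exact hup _ (hprod _ hK _ hcolonK) J (mul_colon_le J _)

/-- For a commutative ring `R` and a filter `G` of ideals of `R`
(with a basis of finitely generated ideals), `G` is a Gabriel topology iff it
is closed under products of ideals. Here `(I : t)` is `I.colon (span {t})`. -/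
theorem gabriel_iff_closed_under_products {R : Type*} [CommRing R]
    (G : Set (Ideal R))
    (hne : G.Nonempty)
    (hup : ∀ I ∈ G, ∀ J : Ideal R, I ≤ J → J ∈ G)
    (hinter : ∀ I ∈ G, ∀ J ∈ G, I ⊓ J ∈ G)
    (hbasis : ∀ I ∈ G, ∃ J ∈ G, J ≤ I ∧ J.FG) :
    ((∀ I ∈ G, ∀ t : R, I.colon (Ideal.span {t}) ∈ G) ∧
      (∀ J : Ideal R, ∀ I ∈ G, (∀ t ∈ I, J.colon (Ideal.span {t}) ∈ G) → J ∈ G))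
      ↔ (∀ I ∈ G, ∀ J ∈ G, I * J ∈ G) :=
  gabriel_iff_closed_under_products_general G hup hinter hbasis
end

section
/- Let R be a ring and M a nonzero finitely presented left R-module with Hom_R(M,R) = 0. Then the Auslander–Bridger transpose Tr M (the cokernel of f* : P_0* → P_1* for a finite free presentation P_1 →f P_0 → M → 0) is a finitely presented right R-module of projective dimension exactly 1. -/
/-!
Since `Hom(M, R) = 0`, a functional on `P₀` killing the image of `f` is zero, so `f*` is injective
and `0 → P₀* → P₁* → Tr M → 0` is a resolution of `Tr M` by finitely generated free right modules.
If `Tr M` were projective this sequence would split, and a retraction `r` of `f*` gives back a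
section `x ↦ (r(πᵢ)(x))ᵢ` of `f`; then `M ≅ coker f = 0`.
-/

open LinearMap

/-- Precomposition with `f` on duals, as a map of right `R`-modules
(`Rᵐᵒᵖ`-modules): this is `f* : P₀* → P₁*`. -/
def dualPrecomp {R : Type*} [Ring R] {M N : Type*}
    [AddCommGroup M] [Module R M] [AddCommGroup N] [Module R N]
    (f : M →ₗ[R] N) : (N →ₗ[R] R) →ₗ[Rᵐᵒᵖ] (M →ₗ[R] R) where
  toFun g := g.comp f
  map_add' g h := by ext; simp
  map_smul' c g := by ext; simp

open MulOpposite

section DualOfFree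

variable (R : Type*) [Ring R] (ι : Type*) [Finite ι]

instance : Module.Free Rᵐᵒᵖ R :=
  Module.Free.of_equiv (opLinearEquiv Rᵐᵒᵖ : R ≃ₗ[Rᵐᵒᵖ] Rᵐᵒᵖ).symm

instance : Module.Finite Rᵐᵒᵖ R :=
  Module.Finite.equiv (opLinearEquiv Rᵐᵒᵖ : R ≃ₗ[Rᵐᵒᵖ] Rᵐᵒᵖ).symm

instance : Module.Free Rᵐᵒᵖ ((ι → R) →ₗ[R] R) := by
  classical
  have := Fintype.ofFinite ι
  exact Module.Free.of_equiv (LinearEquiv.piRing R R ι Rᵐᵒᵖ).symm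

instance : Module.Finite Rᵐᵒᵖ ((ι → R) →ₗ[R] R) := by
  classical
  have := Fintype.ofFinite ι
  exact Module.Finite.equiv (LinearEquiv.piRing R R ι Rᵐᵒᵖ).symm

end DualOfFree

section Transpose

variable {R : Type*} [Ring R]

theorem dual_eq_sum_smul_proj {ι : Type*} [Fintype ι] [DecidableEq ι] (φ : (ι → R) →ₗ[R] R) :
    φ = ∑ i, op (φ (Pi.single i 1)) • (LinearMap.proj i : (ι → R) →ₗ[R] R) := by
  ext u
  simp [Finset.sum_apply, Pi.single_apply]

theorem dualPrecomp_injective {M N : Type*} [AddCommGroup M] [Module R M]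
    [AddCommGroup N] [Module R N] {f : M →ₗ[R] N}
    (h : ∀ g : (N ⧸ range f) →ₗ[R] R, g = 0) : Function.Injective (dualPrecomp f) := by
  refine (injective_iff_map_eq_zero _).2 fun g hg => ?_
  have hle : range f ≤ ker g := range_le_ker_iff.2 hg
  rw [← (range f).liftQ_mkQ g hle, h ((range f).liftQ g hle), zero_comp]

theorem exists_leftInverse_of_projective_quotient_range {S A B : Type*} [Ring S]
    [AddCommGroup A] [Module S A] [AddCommGroup B] [Module S B] {F : A →ₗ[S] B}
    (hF : Function.Injective F) [Module.Projective S (B ⧸ range F)] :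
    ∃ r : B →ₗ[S] A, r ∘ₗ F = LinearMap.id :=
  ((exact_map_mkQ_range F).split_tfae hF (range F).mkQ_surjective).out 0 1 |>.mp
    (Module.projective_lifting_property _ _ (range F).mkQ_surjective)

theorem surjective_of_leftInverse_dualPrecomp {ι κ : Type*} [Fintype ι] [DecidableEq ι]
    {f : (ι → R) →ₗ[R] (κ → R)} {r : ((ι → R) →ₗ[R] R) →ₗ[Rᵐᵒᵖ] ((κ → R) →ₗ[R] R)}
    (hr : r ∘ₗ dualPrecomp f = LinearMap.id) : Function.Surjective f := by
  intro x
  set y : ι → R := fun i => r (LinearMap.proj i) x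
  have key (ψ : (κ → R) →ₗ[R] R) : ψ (f y) = ψ x := by
    have hexp := dual_eq_sum_smul_proj (dualPrecomp f ψ)
    calc ψ (f y) = dualPrecomp f ψ y := rfl
      _ = ∑ i, y i * ψ (f (Pi.single i 1)) := by
        rw [hexp]; simp [Finset.sum_apply, dualPrecomp]
      _ = r (dualPrecomp f ψ) x := by
        rw [hexp, map_sum]; simp [Finset.sum_apply, dualPrecomp, y]
      _ = ψ x := by rw [← comp_apply r, hr, id_apply]
  exact ⟨y, funext fun k => key (LinearMap.proj k)⟩

end Transpose

/-- If `M` is a nonzero finitely presented left module over a ring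
`R` (presented by `f : P₁ = R^m → P₀ = R^n` with `M ≅ coker f`) with
`Hom_R(M, R) = 0`, then the Auslander–Bridger transpose
`Tr M = coker (f* : P₀* → P₁*)` is a finitely presented right `R`-module of
projective dimension exactly `1` (i.e. it is not projective, and it is a
quotient of the projective module `P₁*` by the projective submodule
`range f*`). -/
theorem transpose_fp_pd_one (R : Type) [Ring R] (m n : ℕ)
    (f : (Fin m → R) →ₗ[R] (Fin n → R))
    (M : Type) [AddCommGroup M] [Module R M]
    (pres : M ≃ₗ[R] ((Fin n → R) ⧸ LinearMap.range f))
    (hM : Nontrivial M)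
    (hhom : ∀ g : M →ₗ[R] R, g = 0) :
    Module.FinitePresentation Rᵐᵒᵖ
        (((Fin m → R) →ₗ[R] R) ⧸ LinearMap.range (dualPrecomp f)) ∧
    Module.Projective Rᵐᵒᵖ ((Fin m → R) →ₗ[R] R) ∧
    Module.Projective Rᵐᵒᵖ ↥(LinearMap.range (dualPrecomp f)) ∧
    ¬ Module.Projective Rᵐᵒᵖ
        (((Fin m → R) →ₗ[R] R) ⧸ LinearMap.range (dualPrecomp f)) := by
  have hinj : Function.Injective (dualPrecomp f) :=
    dualPrecomp_injective fun g => by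
      refine LinearMap.ext fun q => ?_
      obtain ⟨x, rfl⟩ := pres.surjective q
      exact congr($(hhom (g ∘ₗ pres.toLinearMap)) x)
  have := Module.finitePresentation_of_projective Rᵐᵒᵖ ((Fin m → R) →ₗ[R] R)
  refine ⟨Module.finitePresentation_of_surjective _ (range _).mkQ_surjective ?_, inferInstance,
    .of_equiv (LinearEquiv.ofInjective _ hinj), fun hTr => ?_⟩
  · rw [Submodule.ker_mkQ]
    exact Submodule.fg_range _
  · obtain ⟨r, hr⟩ := exists_leftInverse_of_projective_quotient_range hinj
    have hf : range f = ⊤ := range_eq_top.2 (surjective_of_leftInverse_dualPrecomp hr)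
    have : Subsingleton ((Fin n → R) ⧸ range f) := Submodule.Quotient.subsingleton_iff.2 hf
    exact not_subsingleton M pres.toEquiv.subsingleton
end

section
/- Let R be a ring and S a finitely presented right R-module of projective dimension at most 1. Put S† = Ext^1_R(S,R). Then S† is a finitely presented left R-module satisfying Hom_R(S†, R) = 0. -/
open LinearMap

variable {R : Type*} [Ring R]

def MulOpposite.opLinearEquivSelf : R ≃ₗ[Rᵐᵒᵖ] Rᵐᵒᵖ where
  toFun := MulOpposite.op
  invFun := MulOpposite.unop
  map_add' := MulOpposite.op_add
  map_smul' _ _ := rfl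
  left_inv _ := rfl
  right_inv _ := rfl

instance inst_s5 : Module.Free Rᵐᵒᵖ R := .of_equiv MulOpposite.opLinearEquivSelf.symm

instance inst_s5_2 : Module.Finite Rᵐᵒᵖ R := .equiv MulOpposite.opLinearEquivSelf.symm

theorem Module.finitePresentation_quotient_range {A M N : Type*} [Ring A]
    [AddCommGroup M] [Module A M] [AddCommGroup N] [Module A N]
    [Module.FinitePresentation A M] [Module.Finite A N] (f : N →ₗ[A] M) :
    Module.FinitePresentation A (M ⧸ range f) :=
  Module.finitePresentation_of_surjective _ (range f).mkQ_surjective <| by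
    rw [Submodule.ker_mkQ, range_eq_map]
    exact (Module.finite_def.mp ‹_›).map f

section FiniteFree

variable {ι : Type*} [Fintype ι] [DecidableEq ι]

instance : Module.FinitePresentation Rᵐᵒᵖ ((ι → R) →ₗ[R] R) :=
  haveI : Module.FinitePresentation Rᵐᵒᵖ (ι → R) :=
    Module.finitePresentation_of_projective _ _
  .of_equiv (LinearEquiv.piRing R R ι Rᵐᵒᵖ).symm

theorem dual_pi_apply (h : (ι → R) →ₗ[R] R) (x : ι → R) :
    h x = ∑ j, x j * h (Pi.single j 1) := by
  conv_lhs => rw [← (LinearEquiv.piRing R R ι ℕ).symm_apply_apply h,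
    LinearEquiv.piRing_symm_apply]
  rfl

theorem dual_pi_eq_sum_smul_proj (h : (ι → R) →ₗ[R] R) :
    h = ∑ j, MulOpposite.op (h (Pi.single j 1)) • proj j := by
  refine LinearMap.ext fun x ↦ ?_
  rw [dual_pi_apply h x]
  simp [MulOpposite.smul_eq_mul_unop]

theorem apply_eq_apply_proj (ψ : ((ι → R) →ₗ[R] R) →ₗ[Rᵐᵒᵖ] R) (h : (ι → R) →ₗ[R] R) :
    ψ h = h fun j ↦ ψ (proj j) := by
  conv_lhs => rw [dual_pi_eq_sum_smul_proj h]
  rw [map_sum, dual_pi_apply h]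
  simp [MulOpposite.smul_eq_mul_unop]

end FiniteFree

section Injective

variable {ι κ : Type*} [Fintype ι] [DecidableEq ι] {g : (ι → R) →ₗ[R] (κ → R)}

theorem eq_zero_of_forall_apply_dualPrecomp_eq_zero (hg : Function.Injective g)
    {ψ : ((ι → R) →ₗ[R] R) →ₗ[Rᵐᵒᵖ] R} (hψ : ∀ h, ψ (dualPrecomp g h) = 0) : ψ = 0 := by
  have hx : (fun j ↦ ψ (proj j)) = 0 := hg <| funext fun i ↦ by
    have := hψ (proj i)
    rw [apply_eq_apply_proj] at this
    simpa [dualPrecomp] using this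
  ext h
  rw [apply_eq_apply_proj ψ, hx, map_zero, LinearMap.zero_apply]

theorem quotient_range_dualPrecomp_hom_eq_zero (hg : Function.Injective g)
    (φ : (((ι → R) →ₗ[R] R) ⧸ range (dualPrecomp g)) →ₗ[Rᵐᵒᵖ] R) : φ = 0 :=
  Submodule.linearMap_qext _ <| eq_zero_of_forall_apply_dualPrecomp_eq_zero hg fun h ↦ by
    rw [comp_apply, Submodule.mkQ_apply,
      (Submodule.Quotient.mk_eq_zero _).mpr (mem_range_self _ h), map_zero]

end Injective

theorem ext_dual_fp_and_reflexive_zero_general (R : Type) [Ring R] (m n : ℕ)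
    (g : (Fin m → R) →ₗ[R] (Fin n → R)) (hg : Function.Injective g) :
    Module.FinitePresentation Rᵐᵒᵖ
        (((Fin m → R) →ₗ[R] R) ⧸ LinearMap.range (dualPrecomp g)) ∧
    ∀ φ : (((Fin m → R) →ₗ[R] R) ⧸ LinearMap.range (dualPrecomp g)) →ₗ[Rᵐᵒᵖ] R,
      φ = 0 :=
  ⟨Module.finitePresentation_quotient_range _, quotient_range_dualPrecomp_hom_eq_zero hg⟩

/-- Let `R` be a ring and `S` a finitely presented module of
projective dimension at most `1`, given by a projective resolution
`0 → P₁ = R^m → P₀ = R^n → S → 0` (so `g` is injective and `S ≅ coker g`).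
Put `S† = Ext¹_R(S, R)`, which is computed from the resolution as the cokernel
of `g* : P₀* → P₁*` (a module on the other side, here an `Rᵐᵒᵖ`-module).
Then `S†` is finitely presented and satisfies `Hom_R(S†, R) = 0`. -/
theorem ext_dual_fp_and_reflexive_zero (R : Type) [Ring R] (m n : ℕ)
    (g : (Fin m → R) →ₗ[R] (Fin n → R)) (hg : Function.Injective g)
    (S : Type) [AddCommGroup S] [Module R S]
    (pres : S ≃ₗ[R] ((Fin n → R) ⧸ LinearMap.range g)) :
    Module.FinitePresentation Rᵐᵒᵖ
        (((Fin m → R) →ₗ[R] R) ⧸ LinearMap.range (dualPrecomp g)) ∧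
    ∀ φ : (((Fin m → R) →ₗ[R] R) ⧸ LinearMap.range (dualPrecomp g)) →ₗ[Rᵐᵒᵖ] R,
      φ = 0 :=
  ext_dual_fp_and_reflexive_zero_general R m n g hg
end

section
/- Let R be a commutative noetherian ring and M an R-module. Then a prime p is vaguely associated to M if and only if p is associated to M; that is, R/p lies in the smallest class containing M closed under submodules and direct limits if and only if R/p embeds into M. -/
/-!
Since `R` is noetherian, `p` is finitely generated, so a map from `R ⧸ p` into a direct limit
is determined by an element killed by finitely many generators of `p`. Each generator kills a
representative of that element in some component, so the map factors through a component; if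
it is injective, so is the factor. Hence the class of modules into which `R ⧸ p` embeds only if
it embeds into `M` contains `M` and is closed under isomorphisms, submodules and direct limits,
so it contains every member of `SubLim({M})`, in particular `R ⧸ p` itself.
-/

universe u

/-- `MemSubLim R M N` says that the module `N` belongs to `SubLim({M})`, the
smallest isomorphism-closed class of `R`-modules containing `M` and closed
under submodules and direct limits of directed systems. -/
def MemSubLim (R : Type u) [CommRing R]
    (M : Type u) [AddCommGroup M] [Module R M]
    (N : Type u) [AddCommGroup N] [Module R N] : Prop :=
  ∀ P : (X : Type u) → [AddCommGroup X] → [Module R X] → Prop,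
    P M →
    (∀ (X : Type u) [AddCommGroup X] [Module R X]
       (Y : Type u) [AddCommGroup Y] [Module R Y],
        (X ≃ₗ[R] Y) → P X → P Y) →
    (∀ (X : Type u) [AddCommGroup X] [Module R X] (L : Submodule R X),
        P X → P L) →
    (∀ (ι : Type u) [Preorder ι] [IsDirected ι (· ≤ ·)] [Nonempty ι]
        [DecidableEq ι]
        (G : ι → Type u) [∀ i, AddCommGroup (G i)] [∀ i, Module R (G i)]
        (f : ∀ i j, i ≤ j → G i →ₗ[R] G j) [DirectedSystem G (f · · ·)],
        (∀ i, P (G i)) → P (Module.DirectLimit G f)) →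
    P N

namespace Module.DirectLimit

variable {R : Type*} [CommRing R] {ι : Type*} [Preorder ι] [IsDirected ι (· ≤ ·)]
  [Nonempty ι] [DecidableEq ι] {G : ι → Type*} [∀ i, AddCommGroup (G i)] [∀ i, Module R (G i)]
  {f : ∀ i j, i ≤ j → G i →ₗ[R] G j} [DirectedSystem G (f · · ·)]

theorem exists_of_forall_mem_finset_smul_eq_zero (s : Finset R) (x : DirectLimit G f)
    (hx : ∀ a ∈ s, a • x = 0) : ∃ i g, of R ι G f i g = x ∧ ∀ a ∈ s, a • g = 0 := by
  classical
  induction s using Finset.induction_on with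
  | empty =>
    obtain ⟨i, g, hg⟩ := exists_of x
    exact ⟨i, g, hg, by simp⟩
  | insert a s _ ih =>
    obtain ⟨i, g, hg, hs⟩ := ih fun b hb => hx b (Finset.mem_insert_of_mem hb)
    have hag : of R ι G f i (a • g) = 0 := by
      rw [map_smul, hg, hx a (Finset.mem_insert_self a s)]
    obtain ⟨j, hij, hj⟩ := of.zero_exact hag
    refine ⟨j, f i j hij g, by rw [of_f, hg], ?_⟩
    rintro b hb
    rcases Finset.mem_insert.mp hb with rfl | hb
    · rwa [← map_smul]
    · rw [← map_smul, hs b hb, map_zero]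

theorem exists_of_fg_le_ker_toSpanSingleton {I : Ideal R} (hI : I.FG) (x : DirectLimit G f)
    (hx : I ≤ LinearMap.ker (LinearMap.toSpanSingleton R _ x)) :
    ∃ i g, of R ι G f i g = x ∧ I ≤ LinearMap.ker (LinearMap.toSpanSingleton R (G i) g) := by
  obtain ⟨s, rfl⟩ := hI
  obtain ⟨i, g, hg, hs⟩ := exists_of_forall_mem_finset_smul_eq_zero s x
    fun a ha => hx (Submodule.subset_span ha)
  exact ⟨i, g, hg, Submodule.span_le.mpr hs⟩

theorem exists_of_comp_eq_of_fg {I : Ideal R} (hI : I.FG) (ψ : R ⧸ I →ₗ[R] DirectLimit G f) :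
    ∃ i, ∃ χ : R ⧸ I →ₗ[R] G i, of R ι G f i ∘ₗ χ = ψ := by
  have hψ : ψ ∘ₗ I.mkQ = LinearMap.toSpanSingleton R _ (ψ (I.mkQ 1)) :=
    LinearMap.ext_ring (by simp)
  have hI_le : I ≤ LinearMap.ker (LinearMap.toSpanSingleton R _ (ψ (I.mkQ 1))) := by
    have := LinearMap.ker_le_ker_comp I.mkQ ψ
    rwa [Submodule.ker_mkQ, hψ] at this
  obtain ⟨i, g, hg, hgI⟩ := exists_of_fg_le_ker_toSpanSingleton hI _ hI_le
  refine ⟨i, I.liftQ (LinearMap.toSpanSingleton R (G i) g) hgI, ?_⟩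
  exact Submodule.linearMap_qext _ <| LinearMap.ext_ring <| by
    simp only [LinearMap.comp_apply, Submodule.mkQ_apply, Submodule.liftQ_apply,
      LinearMap.toSpanSingleton_apply, one_smul, hg]

end Module.DirectLimit

theorem memSubLim_of_injective {R : Type u} [CommRing R] {M N : Type u} [AddCommGroup M]
    [Module R M] [AddCommGroup N] [Module R N] (φ : N →ₗ[R] M) (hφ : Function.Injective φ) :
    MemSubLim R M N :=
  fun _ hM hiso hsub _ =>
    hiso _ _ (LinearEquiv.ofInjective φ hφ).symm (hsub M (LinearMap.range φ) hM)

theorem MemSubLim.exists_injective_of_quotient {R : Type u} [CommRing R] {M N : Type u}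
    [AddCommGroup M] [Module R M] [AddCommGroup N] [Module R N] (h : MemSubLim R M N)
    {I : Ideal R} (hI : I.FG) (hN : ∃ φ : R ⧸ I →ₗ[R] N, Function.Injective φ) :
    ∃ φ : R ⧸ I →ₗ[R] M, Function.Injective φ := by
  refine h (fun X _ _ => (∃ ψ : R ⧸ I →ₗ[R] X, Function.Injective ψ) →
      ∃ φ : R ⧸ I →ₗ[R] M, Function.Injective φ) id ?iso ?sub ?lim hN
  case iso =>
    rintro X _ _ Y _ _ e hX ⟨ψ, hψ⟩
    exact hX ⟨e.symm ∘ₗ ψ, e.symm.injective.comp hψ⟩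
  case sub =>
    rintro X _ _ L hX ⟨ψ, hψ⟩
    exact hX ⟨L.subtype ∘ₗ ψ, L.injective_subtype.comp hψ⟩
  case lim =>
    rintro ι _ _ _ _ G _ _ f _ hG ⟨ψ, hψ⟩
    obtain ⟨i, χ, rfl⟩ := Module.DirectLimit.exists_of_comp_eq_of_fg hI ψ
    exact hG i ⟨χ, Function.Injective.of_comp (f := Module.DirectLimit.of R ι G f i) hψ⟩

theorem memSubLim_quotient_prime_iff_assoc_general (R : Type u) [CommRing R]
    [IsNoetherianRing R] (M : Type u) [AddCommGroup M] [Module R M]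
    (p : Ideal R) :
    MemSubLim R M (R ⧸ p) ↔ ∃ φ : (R ⧸ p) →ₗ[R] M, Function.Injective φ :=
  ⟨fun h => h.exists_injective_of_quotient (IsNoetherian.noetherian p)
      ⟨LinearMap.id, Function.injective_id⟩,
    fun ⟨φ, hφ⟩ => memSubLim_of_injective φ hφ⟩

/-- Over a commutative noetherian ring, a prime `p` is vaguely
associated to a module `M` (i.e. `R/p ∈ SubLim({M})`) iff `p` is associated to
`M` (i.e. `R/p` embeds into `M`). -/
theorem memSubLim_quotient_prime_iff_assoc (R : Type u) [CommRing R]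
    [IsNoetherianRing R] (M : Type u) [AddCommGroup M] [Module R M]
    (p : Ideal R) (hp : p.IsPrime) :
    MemSubLim R M (R ⧸ p) ↔ ∃ φ : (R ⧸ p) →ₗ[R] M, Function.Injective φ :=
  memSubLim_quotient_prime_iff_assoc_general R M p
end

section
/- Let R be a commutative ring and M a nonzero R-module. Then there exists a prime ideal p of R such that R/p belongs to the smallest class containing M that is closed under submodules and direct limits (i.e., the set of vaguely associated primes of M is nonempty). -/
/-!
For `x ≠ 0` in `M`, `R ⧸ ann x ≅ R ∙ x` lies in `SubLim({M})`. By Zorn's lemma pick `p` maximal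
among the proper ideals `I` with `R ⧸ I ∈ SubLim({M})`; chains are harmless because `R ⧸ ⋃ Iₖ` is
the direct limit of the `R ⧸ Iₖ`. For `a ∉ p`, the cyclic submodule `R ∙ ā ≅ R ⧸ (p : a)` of
`R ⧸ p` is again in the class and `(p : a) ⊇ p` is proper, so `(p : a) = p`: this is primality.
-/

universe u

namespace Submodule

variable {R X : Type*} [Ring R] [AddCommGroup X] [Module R X]
  {ι : Type*} [Preorder ι] {N : ι → Submodule R X}

theorem directedSystem_mapQ (hN : Monotone N) :
    DirectedSystem (fun i ↦ X ⧸ N i) (fun i j h ↦ mapQ (N i) (N j) LinearMap.id (hN h)) where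
  map_self i x := by
    obtain ⟨x, rfl⟩ := mkQ_surjective _ x
    rfl
  map_map _ _ _ _ _ x := by
    obtain ⟨x, rfl⟩ := mkQ_surjective _ x
    rfl

variable [IsDirectedOrder ι] [Nonempty ι] [DecidableEq ι]

noncomputable def directLimitQuotientEquivQuotientISup (hN : Monotone N) :
    Module.DirectLimit (fun i ↦ X ⧸ N i) (fun i j h ↦ mapQ (N i) (N j) LinearMap.id (hN h)) ≃ₗ[R]
      X ⧸ ⨆ i, N i := by
  refine .ofBijective (Module.DirectLimit.lift R ι _ _
    (fun i ↦ mapQ (N i) (⨆ i, N i) LinearMap.id (le_iSup N i)) fun i j h x ↦ ?_) ⟨?_, ?_⟩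
  · obtain ⟨x, rfl⟩ := mkQ_surjective _ x
    rfl
  · rw [← LinearMap.ker_eq_bot, LinearMap.ker_eq_bot']
    intro z hz
    obtain ⟨i, x, rfl⟩ := Module.DirectLimit.exists_of z
    obtain ⟨x, rfl⟩ := mkQ_surjective _ x
    rw [Module.DirectLimit.lift_of] at hz
    obtain ⟨j, hj⟩ := (mem_iSup_of_directed N hN.directed_le).1 ((Quotient.mk_eq_zero _).1 hz)
    obtain ⟨k, hik, hjk⟩ := exists_ge_ge i j
    have hx : mapQ (N i) (N k) LinearMap.id (hN hik) (mkQ _ x) = 0 :=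
      (Quotient.mk_eq_zero _).2 (hN hjk hj)
    rw [← Module.DirectLimit.of_f (hij := hik), hx, map_zero]
  · intro y
    obtain ⟨x, rfl⟩ := mkQ_surjective _ y
    exact ⟨Module.DirectLimit.of R ι _ _ (Classical.arbitrary ι) (mkQ _ x), by simp⟩

end Submodule

theorem Ideal.torsionOf_quotient_mk {R : Type*} [CommRing R] (I : Ideal R) (a : R) :
    Ideal.torsionOf R (R ⧸ I) (Ideal.Quotient.mk I a) = I.colon {a} := by
  ext r
  simp [Submodule.mem_colon_singleton, Algebra.smul_def, ← map_mul, Ideal.Quotient.eq_zero_iff_mem]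

theorem Ideal.isPrime_of_maximal_colon {R : Type*} [CommRing R] {P : Ideal R → Prop}
    (hP : ∀ I a, P I → a ∉ I → P (I.colon {a})) {I : Ideal R}
    (hI : Maximal (fun J ↦ J ≠ ⊤ ∧ P J) I) : I.IsPrime := by
  refine ⟨hI.prop.1, fun {a b} hab ↦ or_iff_not_imp_left.2 fun ha ↦ ?_⟩
  have hcolon : I.colon {a} ≠ ⊤ := by
    rwa [Ne, Submodule.colon_eq_top_iff_subset, Set.singleton_subset_iff]
  have hle : I.colon {a} ≤ I := hI.2 ⟨hcolon, hP I a hI.prop.2 ha⟩ Ideal.le_colon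
  exact hle (Submodule.mem_colon_singleton.2 (by rwa [smul_eq_mul, mul_comm]))

theorem Ideal.sSup_ne_top_of_directedOn {R : Type*} [Semiring R] {c : Set (Ideal R)}
    (hne : c.Nonempty) (hc : DirectedOn (· ≤ ·) c) (htop : ∀ I ∈ c, I ≠ ⊤) : sSup c ≠ ⊤ :=
  (CompleteLattice.IsCompactElement.directed_sSup_lt_of_lt Ideal.isCompactElement_top hne hc
    fun I hI ↦ (htop I hI).lt_top).ne

section MemSubLim

variable {R : Type u} [CommRing R] {M : Type u} [AddCommGroup M] [Module R M]
  {N : Type u} [AddCommGroup N] [Module R N]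

theorem memSubLim_self : MemSubLim R M M :=
  fun _ hM _ _ _ ↦ hM

theorem MemSubLim.of_linearEquiv {N' : Type u} [AddCommGroup N'] [Module R N']
    (h : MemSubLim R M N) (e : N ≃ₗ[R] N') : MemSubLim R M N' :=
  fun P hM hiso hsub hlim ↦ hiso N N' e (h P hM hiso hsub hlim)

theorem MemSubLim.submodule (h : MemSubLim R M N) (L : Submodule R N) : MemSubLim R M L :=
  fun P hM hiso hsub hlim ↦ hsub N L (h P hM hiso hsub hlim)

theorem MemSubLim.directLimit {ι : Type u} [Preorder ι] [IsDirectedOrder ι] [Nonempty ι]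
    [DecidableEq ι] {G : ι → Type u} [∀ i, AddCommGroup (G i)] [∀ i, Module R (G i)]
    {f : ∀ i j, i ≤ j → G i →ₗ[R] G j} [DirectedSystem G (f · · ·)]
    (h : ∀ i, MemSubLim R M (G i)) : MemSubLim R M (Module.DirectLimit G f) :=
  fun P hM hiso hsub hlim ↦ hlim ι G f fun i ↦ h i P hM hiso hsub hlim

theorem MemSubLim.quotient_torsionOf (h : MemSubLim R M N) (y : N) :
    MemSubLim R M (R ⧸ Ideal.torsionOf R N y) :=
  (h.submodule (R ∙ y)).of_linearEquiv (Ideal.quotTorsionOfEquivSpanSingleton R N y).symm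

theorem MemSubLim.quotient_colon {I : Ideal R} (h : MemSubLim R M (R ⧸ I)) (a : R) :
    MemSubLim R M (R ⧸ I.colon {a}) :=
  Ideal.torsionOf_quotient_mk I a ▸ h.quotient_torsionOf _

theorem MemSubLim.quotient_sSup {c : Set (Ideal R)} (hc : IsChain (· ≤ ·) c) (hne : c.Nonempty)
    (h : ∀ I ∈ c, MemSubLim R M (R ⧸ I)) : MemSubLim R M (R ⧸ sSup c) := by
  classical
  have : Nonempty c := hne.to_subtype
  have : IsDirectedOrder c := hc.directedOn.isDirectedOrder
  have hmono : Monotone ((↑) : c → Ideal R) := Subtype.mono_coe _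
  have := Submodule.directedSystem_mapQ hmono
  have hlim : MemSubLim R M (Module.DirectLimit (fun I : c ↦ R ⧸ I.1)
      fun _ _ hIJ ↦ Submodule.mapQ _ _ LinearMap.id (hmono hIJ)) :=
    MemSubLim.directLimit fun I ↦ h I I.2
  exact hlim.of_linearEquiv ((Submodule.directLimitQuotientEquivQuotientISup hmono).trans
    (Submodule.quotEquivOfEq _ _ (sSup_eq_iSup' c).symm))

end MemSubLim

/-- Over a commutative ring, every nonzero module has a vaguely
associated prime: there is a prime `p` with `R/p ∈ SubLim({M})`. -/
theorem exists_vaguely_associated_prime (R : Type u) [CommRing R]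
    (M : Type u) [AddCommGroup M] [Module R M] (hM : Nontrivial M) :
    ∃ p : Ideal R, p.IsPrime ∧ MemSubLim R M (R ⧸ p) := by
  obtain ⟨x, hx⟩ := exists_ne (0 : M)
  let S : Set (Ideal R) := {I | I ≠ ⊤ ∧ MemSubLim R M (R ⧸ I)}
  have hxS : Ideal.torsionOf R M x ∈ S :=
    ⟨by rwa [Ne, Ideal.torsionOf_eq_top_iff], memSubLim_self.quotient_torsionOf x⟩
  have hchain : ∀ c ⊆ S, IsChain (· ≤ ·) c → ∀ I ∈ c, ∃ J ∈ S, ∀ K ∈ c, K ≤ J :=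
    fun c hcS hc I hI ↦ ⟨sSup c,
      ⟨Ideal.sSup_ne_top_of_directedOn ⟨I, hI⟩ hc.directedOn fun K hK ↦ (hcS hK).1,
        MemSubLim.quotient_sSup hc ⟨I, hI⟩ fun K hK ↦ (hcS hK).2⟩,
      fun _ ↦ le_sSup⟩
  obtain ⟨p, -, hp⟩ := zorn_le_nonempty₀ S hchain _ hxS
  exact ⟨p, Ideal.isPrime_of_maximal_colon (fun I a hI _ ↦ hI.quotient_colon a) hp, hp.prop.2⟩
end

section
/- Let R be a commutative ring and M an R-module. Every prime p vaguely associated to M lies in the support of M, i.e., the localization M_p is nonzero. -/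
universe u

/-! The modules `X` with `X_p = 0` form a class containing `M` (if `M_p = 0`) and closed
under isomorphisms, submodules and direct limits, so it contains `R ⧸ p`; but `(R ⧸ p)_p` is
the residue field of `R_p`, which is nonzero. -/

namespace LocalizedModule

variable {R : Type*} [CommRing R] (S : Submonoid R)

theorem subsingleton_of_injective {X Y : Type*} [AddCommMonoid X] [Module R X]
    [AddCommMonoid Y] [Module R Y] (g : X →ₗ[R] Y) (hg : Function.Injective g)
    [Subsingleton (LocalizedModule S Y)] : Subsingleton (LocalizedModule S X) := by
  rw [subsingleton_iff]
  intro x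
  obtain ⟨r, hr, hrx⟩ := subsingleton_iff.mp ‹_› (g x)
  exact ⟨r, hr, hg (by rw [map_smul, hrx, map_zero])⟩

theorem subsingleton_directLimit {ι : Type*} [Preorder ι] [IsDirected ι (· ≤ ·)] [Nonempty ι]
    [DecidableEq ι] {G : ι → Type*} [∀ i, AddCommGroup (G i)] [∀ i, Module R (G i)]
    (f : ∀ i j, i ≤ j → G i →ₗ[R] G j)
    (hG : ∀ i, Subsingleton (LocalizedModule S (G i))) :
    Subsingleton (LocalizedModule S (Module.DirectLimit G f)) := by
  rw [subsingleton_iff]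
  intro z
  obtain ⟨i, x, rfl⟩ := Module.DirectLimit.exists_of z
  obtain ⟨r, hr, hrx⟩ := subsingleton_iff.mp (hG i) x
  exact ⟨r, hr, by rw [← map_smul, hrx, map_zero]⟩

theorem nontrivial_quotient_of_le (p : Ideal R) [p.IsPrime] {I : Ideal R} (hI : I ≤ p) :
    Nontrivial (LocalizedModule p.primeCompl (R ⧸ I)) := by
  rw [← not_subsingleton_iff_nontrivial, subsingleton_iff]
  intro h
  obtain ⟨r, hr, hr1⟩ := h 1
  rw [Algebra.smul_def, mul_one, Ideal.Quotient.algebraMap_eq,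
    Ideal.Quotient.eq_zero_iff_mem] at hr1
  exact hr (hI hr1)

end LocalizedModule

theorem MemSubLim.subsingleton_localizedModule {R : Type u} [CommRing R]
    {M N : Type u} [AddCommGroup M] [Module R M] [AddCommGroup N] [Module R N]
    (h : MemSubLim R M N) (S : Submonoid R) [Subsingleton (LocalizedModule S M)] :
    Subsingleton (LocalizedModule S N) :=
  h (fun X _ _ => Subsingleton (LocalizedModule S X)) ‹_›
    (fun _ _ _ _ _ _ e _ => LocalizedModule.subsingleton_of_injective S _ e.symm.injective)
    (fun _ _ _ L _ => LocalizedModule.subsingleton_of_injective S _ L.injective_subtype)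
    (fun _ _ _ _ _ _ _ _ f _ hG => LocalizedModule.subsingleton_directLimit S f hG)

/-- Over a commutative ring, every prime vaguely associated to a
module `M` lies in the support of `M`: the localization `M_p` is nonzero. -/
theorem vaguely_associated_mem_support (R : Type u) [CommRing R]
    (M : Type u) [AddCommGroup M] [Module R M]
    (p : Ideal R) (hp : p.IsPrime) (h : MemSubLim R M (R ⧸ p)) :
    Nontrivial (LocalizedModule p.primeCompl M) := by
  by_contra hM
  rw [not_nontrivial_iff_subsingleton] at hM
  have := LocalizedModule.nontrivial_quotient_of_le p le_rfl
  exact not_subsingleton _ (h.subsingleton_localizedModule p.primeCompl)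
end

section
/- Let R be a ring and (T,F) a hereditary torsion pair of finite type in Mod-R. Then there is a set S of finitely presented right R-modules such that F = {M | Hom_R(S,M) = 0 for all S ∈ S}. -/
/-!
Take for `S` all finitely presented torsion modules `R^n ⧸ K`. If `X` receives no nonzero map
from them and `x ∈ X` is the image of a torsion module, then `R x ≅ R ⧸ I` is torsion since `T`
is hereditary. The modules `(R ⧸ J) ⧸ t(R ⧸ J)` (with `t` the torsion radical), for `J ≤ I`
finitely generated, are torsion-free, hence so is their direct limit; the torsion module `R ⧸ I`
maps to it, so `1` is already torsion in some `R ⧸ J`. Then `R ⧸ J` is a finitely presented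
torsion module mapping onto `R x`, so `x = 0`.
-/

universe u

open Submodule

section TorsionPair

variable {R : Type u} [Ring R]

structure IsTorsionPair (T F : (X : Type u) → [AddCommGroup X] → [Module R X] → Prop) :
    Prop where
  torsion_iff : ∀ (X : Type u) [AddCommGroup X] [Module R X],
    T X ↔ ∀ (Y : Type u) [AddCommGroup Y] [Module R Y], F Y → ∀ φ : X →ₗ[R] Y, φ = 0
  torsionFree_iff : ∀ (X : Type u) [AddCommGroup X] [Module R X],
    F X ↔ ∀ (Y : Type u) [AddCommGroup Y] [Module R Y], T Y → ∀ φ : Y →ₗ[R] X, φ = 0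

def IsClosedUnderDirectLimits (F : (X : Type u) → [AddCommGroup X] → [Module R X] → Prop) :
    Prop :=
  ∀ (ι : Type u) [Preorder ι] [IsDirected ι (· ≤ ·)] [Nonempty ι] [DecidableEq ι]
    (G : ι → Type u) [∀ i, AddCommGroup (G i)] [∀ i, Module R (G i)]
    (f : ∀ i j, i ≤ j → G i →ₗ[R] G j) [DirectedSystem G (f · · ·)],
    (∀ i, F (G i)) → F (Module.DirectLimit G f)

def torsionRadical (T : (X : Type u) → [AddCommGroup X] → [Module R X] → Prop)
    (M : Type u) [AddCommGroup M] [Module R M] : Submodule R M :=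
  sSup {N : Submodule R M | T N}

theorem directedSystem_factor {ι M : Type*} [Preorder ι] [AddCommGroup M] [Module R M]
    {K : ι → Submodule R M} (hK : Monotone K) :
    DirectedSystem (fun i => M ⧸ K i) (fun _ _ h => factor (hK h)) where
  map_self _ x := Quotient.induction_on _ x fun _ => rfl
  map_map _ _ _ _ _ x := Quotient.induction_on _ x fun _ => rfl

namespace IsTorsionPair

variable {T F : (X : Type u) → [AddCommGroup X] → [Module R X] → Prop}
variable {M N : Type u} [AddCommGroup M] [Module R M] [AddCommGroup N] [Module R N]

theorem torsion_of_surjective (hTF : IsTorsionPair T F) (g : M →ₗ[R] N)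
    (hg : Function.Surjective g) (hM : T M) : T N := by
  refine (hTF.torsion_iff N).mpr fun Y _ _ hY φ => ?_
  have hφg : φ.comp g = 0 := (hTF.torsion_iff M).mp hM Y hY _
  exact (LinearMap.cancel_right hg).mp (hφg.trans (LinearMap.zero_comp g).symm)

theorem torsion_of_equiv (hTF : IsTorsionPair T F) (e : M ≃ₗ[R] N) (hM : T M) : T N :=
  hTF.torsion_of_surjective e.toLinearMap e.surjective hM

theorem torsionFree_of_equiv (hTF : IsTorsionPair T F) (e : M ≃ₗ[R] N) (hM : F M) : F N := by
  refine (hTF.torsionFree_iff N).mpr fun Y _ _ hY φ => ?_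
  have hφ : e.symm.toLinearMap.comp φ = 0 := (hTF.torsionFree_iff M).mp hM Y hY _
  ext y
  simpa using LinearMap.congr_fun hφ y

theorem torsion_map (hTF : IsTorsionPair T F) (g : M →ₗ[R] N) {A : Submodule R M} (hA : T A) :
    T (A.map g) :=
  hTF.torsion_of_surjective _ (g.submoduleMap_surjective A) hA

theorem torsion_of_ker_of_range (hTF : IsTorsionPair T F) (g : M →ₗ[R] N)
    (hker : T (LinearMap.ker g)) (hrange : T (LinearMap.range g)) : T M := by
  refine (hTF.torsion_iff M).mpr fun Y _ _ hY φ => ?_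
  have hgφ : LinearMap.ker g ≤ LinearMap.ker φ := fun a ha =>
    LinearMap.congr_fun ((hTF.torsion_iff _).mp hker Y hY (φ.comp (LinearMap.ker g).subtype))
      ⟨a, ha⟩
  have hφ : ((LinearMap.ker g).liftQ φ hgφ).comp g.quotKerEquivRange.symm.toLinearMap = 0 :=
    (hTF.torsion_iff _).mp hrange Y hY _
  ext m
  simpa using LinearMap.congr_fun hφ ⟨g m, LinearMap.mem_range_self g m⟩

theorem torsion_torsionRadical (hTF : IsTorsionPair T F) (M : Type u) [AddCommGroup M]
    [Module R M] : T (torsionRadical T M) := by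
  refine (hTF.torsion_iff _).mpr fun Y _ _ hY φ => ?_
  have hle : torsionRadical T M ≤ (LinearMap.ker φ).map (torsionRadical T M).subtype :=
    sSup_le fun A hA => by
      have hAφ := (hTF.torsion_iff A).mp hA Y hY (φ.comp (inclusion (le_sSup hA)))
      intro a ha
      exact ⟨⟨a, le_sSup hA ha⟩, LinearMap.congr_fun hAφ ⟨a, ha⟩, rfl⟩
  ext ⟨x, hx⟩
  obtain ⟨y, hy, rfl⟩ := hle hx
  exact hy

theorem map_torsionRadical_le (hTF : IsTorsionPair T F) (g : M →ₗ[R] N) :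
    (torsionRadical T M).map g ≤ torsionRadical T N :=
  le_sSup (hTF.torsion_map g (hTF.torsion_torsionRadical M))

theorem torsion_of_torsionRadical_eq_top (hTF : IsTorsionPair T F)
    (h : torsionRadical T M = ⊤) : T M :=
  hTF.torsion_of_equiv topEquiv (h ▸ hTF.torsion_torsionRadical M)

theorem torsionFree_quotient_torsionRadical (hTF : IsTorsionPair T F) (M : Type u)
    [AddCommGroup M] [Module R M] : F (M ⧸ torsionRadical T M) := by
  set t := torsionRadical T M
  refine (hTF.torsionFree_iff _).mpr fun Y _ _ hY φ => ?_
  -- the preimage `P` of `range φ` is an extension of `range φ` by the torsion radical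
  set P : Submodule R M := (LinearMap.range φ).comap t.mkQ
  set g : P →ₗ[R] M ⧸ t := t.mkQ.comp P.subtype
  have htP : t ≤ P := fun m hm => by simp [P, (Quotient.mk_eq_zero t).mpr hm]
  have hker : LinearMap.ker g = t.comap P.subtype := by simp [g, LinearMap.ker_comp]
  have hrange : LinearMap.range g = LinearMap.range φ := by
    simp [g, LinearMap.range_comp, P, map_comap_eq_of_surjective t.mkQ_surjective]
  have hPt : T P := hTF.torsion_of_ker_of_range g
    (hker ▸ hTF.torsion_of_equiv (comapSubtypeEquivOfLe htP).symm
      (hTF.torsion_torsionRadical M))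
    (hrange ▸ hTF.torsion_of_surjective _ φ.surjective_rangeRestrict hY)
  have hφ : LinearMap.range φ ≤ ⊥ := calc
    LinearMap.range φ = P.map t.mkQ := (map_comap_eq_of_surjective t.mkQ_surjective _).symm
    _ ≤ t.map t.mkQ := map_mono (le_sSup hPt)
    _ = ⊥ := mkQ_map_self t
  exact LinearMap.range_eq_bot.mp (le_bot_iff.mp hφ)

theorem torsionFree_quotient_comap_torsionRadical (hTF : IsTorsionPair T F)
    (J : Submodule R M) : F (M ⧸ (torsionRadical T (M ⧸ J)).comap J.mkQ) := by
  have hJ : J ≤ (torsionRadical T (M ⧸ J)).comap J.mkQ := fun m hm => by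
    simp [(Quotient.mk_eq_zero J).mpr hm]
  refine hTF.torsionFree_of_equiv ?_ (hTF.torsionFree_quotient_torsionRadical (M ⧸ J))
  exact (quotEquivOfEq _ _ (map_comap_eq_of_surjective J.mkQ_surjective _).symm).trans
    (quotientQuotientEquivQuotient J _ hJ)

theorem mono_comap_mkQ_torsionRadical (hTF : IsTorsionPair T F) :
    Monotone fun J : Submodule R M => (torsionRadical T (M ⧸ J)).comap J.mkQ :=
  fun _ _ hJ _ hm => hTF.map_torsionRadical_le (factor hJ) ⟨_, hm, rfl⟩

theorem exists_fg_le_mkQ_mem_torsionRadical (hTF : IsTorsionPair T F)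
    (hF : IsClosedUnderDirectLimits F) (I : Submodule R M) (hI : T (M ⧸ I)) (m : M) :
    ∃ J : Submodule R M, J.FG ∧ J ≤ I ∧ J.mkQ m ∈ torsionRadical T (M ⧸ J) := by
  classical
  let ι := {J : Submodule R M // J.FG ∧ J ≤ I}
  have : IsDirected ι (· ≤ ·) := ⟨fun a b =>
    ⟨⟨a.1 ⊔ b.1, a.2.1.sup b.2.1, sup_le a.2.2 b.2.2⟩, le_sup_left (b := b.1),
      le_sup_right (a := a.1)⟩⟩
  let j₀ : ι := ⟨⊥, fg_bot, bot_le⟩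
  have : Nonempty ι := ⟨j₀⟩
  -- `M ⧸ K J ≃ (M ⧸ J) ⧸ t(M ⧸ J)`, written as a quotient of `M` so that the maps are `factor`
  let K : ι → Submodule R M := fun J => (torsionRadical T (M ⧸ J.1)).comap J.1.mkQ
  have hK : Monotone K := fun _ _ h => hTF.mono_comap_mkQ_torsionRadical h
  let f : ∀ i j, i ≤ j → M ⧸ K i →ₗ[R] M ⧸ K j := fun _ _ h => factor (hK h)
  have := directedSystem_factor hK
  have hlim : F (Module.DirectLimit _ f) :=
    hF ι _ f fun J => hTF.torsionFree_quotient_comap_torsionRadical J.1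
  let β : M →ₗ[R] Module.DirectLimit _ f :=
    (Module.DirectLimit.of R ι _ f j₀).comp (K j₀).mkQ
  have hIβ : I ≤ LinearMap.ker β := fun v hv => by
    let Jv : ι := ⟨span R {v}, fg_span_singleton v, (span_singleton_le_iff_mem v I).mpr hv⟩
    have hvK : v ∈ K Jv := le_comap_mkQ _ _ (mem_span_singleton_self v)
    rw [LinearMap.mem_ker, LinearMap.comp_apply,
      ← Module.DirectLimit.of_f (hij := show j₀ ≤ Jv from (bot_le : ⊥ ≤ Jv.1))]
    simp [f, (Quotient.mk_eq_zero _).mpr hvK]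
  -- `β` factors through the torsion module `M ⧸ I` into a torsion-free module
  have hβ : I.liftQ β hIβ = 0 := (hTF.torsionFree_iff _).mp hlim _ hI _
  obtain ⟨J, _, hmJ⟩ := Module.DirectLimit.of.zero_exact (LinearMap.congr_fun hβ (I.mkQ m))
  exact ⟨J.1, J.2.1, J.2.2, (Quotient.mk_eq_zero (K J)).mp hmJ⟩

theorem exists_fg_le_torsion_quotient (hTF : IsTorsionPair T F)
    (hF : IsClosedUnderDirectLimits F) (I : Submodule R M) (hI : T (M ⧸ I)) {m : M}
    (hm : span R {m} = ⊤) : ∃ J : Submodule R M, J.FG ∧ J ≤ I ∧ T (M ⧸ J) := by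
  obtain ⟨J, hJ, hJI, hmJ⟩ := hTF.exists_fg_le_mkQ_mem_torsionRadical hF I hI m
  refine ⟨J, hJ, hJI, hTF.torsion_of_torsionRadical_eq_top (top_le_iff.mp ?_)⟩
  calc ⊤ = (span R {m}).map J.mkQ := by rw [hm, Submodule.map_top, range_mkQ]
    _ = span R {J.mkQ m} := by rw [map_span, Set.image_singleton]
    _ ≤ torsionRadical T (M ⧸ J) := (span_singleton_le_iff_mem _ _).mpr hmJ

end IsTorsionPair

end TorsionPair

/-- Let `R` be a ring and `(T, F)` a hereditary torsion pair of
finite type in `Mod-R` (formulated for modules over an arbitrary ring `R`;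
classes of modules are predicates on modules).  Then there is a set `S` of
finitely presented modules (encoded as quotients `R^n / K` of finite free
modules by finitely generated submodules) such that
`F = {M | Hom_R(S, M) = 0 for all S ∈ S}`. -/
theorem hereditary_finite_type_torsionfree_eq_hom_perp_of_fp
    (R : Type u) [Ring R]
    (T F : (X : Type u) → [AddCommGroup X] → [Module R X] → Prop)
    -- `(T, F)` is a torsion pair:
    (htorsion : ∀ (X : Type u) [AddCommGroup X] [Module R X],
      T X ↔ ∀ (Y : Type u) [AddCommGroup Y] [Module R Y],
        F Y → ∀ φ : X →ₗ[R] Y, φ = 0)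
    (htorsionfree : ∀ (X : Type u) [AddCommGroup X] [Module R X],
      F X ↔ ∀ (Y : Type u) [AddCommGroup Y] [Module R Y],
        T Y → ∀ φ : Y →ₗ[R] X, φ = 0)
    -- hereditary: `T` is closed under submodules:
    (hher : ∀ (X : Type u) [AddCommGroup X] [Module R X]
      (L : Submodule R X), T X → T L)
    -- finite type: `F` is closed under direct limits:
    (hft : ∀ (ι : Type u) [Preorder ι] [IsDirected ι (· ≤ ·)] [Nonempty ι]
        [DecidableEq ι]
        (G : ι → Type u) [∀ i, AddCommGroup (G i)] [∀ i, Module R (G i)]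
        (f : ∀ i j, i ≤ j → G i →ₗ[R] G j) [DirectedSystem G (f · · ·)],
        (∀ i, F (G i)) → F (Module.DirectLimit G f)) :
    ∃ S : Set ((n : ℕ) × Submodule R (Fin n → R)),
      (∀ s ∈ S, s.2.FG) ∧
      ∀ (X : Type u) [AddCommGroup X] [Module R X],
        F X ↔ ∀ s ∈ S, ∀ φ : ((Fin s.1 → R) ⧸ s.2) →ₗ[R] X, φ = 0 := by
  have hTF : IsTorsionPair T F := ⟨htorsion, htorsionfree⟩
  refine ⟨{s | s.2.FG ∧ T ((Fin s.1 → R) ⧸ s.2)}, fun s hs => hs.1, fun X _ _ =>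
    ⟨fun hX s hs φ => (htorsionfree X).mp hX _ hs.2 φ, fun hX => ?_⟩⟩
  refine (htorsionfree X).mpr fun Y _ _ hY φ => LinearMap.ext fun y => ?_
  let π : (Fin 1 → R) →ₗ[R] X := (LinearMap.toSpanSingleton R X (φ y)).comp (LinearMap.proj 0)
  have hπ : LinearMap.range π ≤ LinearMap.range φ := by
    rintro _ ⟨v, rfl⟩
    exact ⟨v 0 • y, by simp [π]⟩
  have hTπ : T ((Fin 1 → R) ⧸ LinearMap.ker π) :=
    hTF.torsion_of_equiv ((comapSubtypeEquivOfLe hπ).trans π.quotKerEquivRange.symm)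
      (hher _ _ (hTF.torsion_of_surjective _ φ.surjective_rangeRestrict hY))
  have hone : span R {fun _ : Fin 1 => (1 : R)} = ⊤ :=
    eq_top_iff.mpr fun v _ =>
      mem_span_singleton.mpr ⟨v 0, funext fun i => by simp [Fin.fin_one_eq_zero i]⟩
  obtain ⟨J, hJ, hJπ, hTJ⟩ := hTF.exists_fg_le_torsion_quotient hft _ hTπ hone
  have hπJ := hX ⟨1, J⟩ ⟨hJ, hTJ⟩ (J.liftQ π hJπ)
  simpa [π] using LinearMap.congr_fun hπJ (J.mkQ fun _ => 1)
end

section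
/- Let R be a commutative ring and X a Thomason subset of Spec R, i.e., a union of sets V(I) with I finitely generated. Then G = {J ideal | there exists a finitely generated ideal I ⊆ J with V(I) ⊆ X} is a finitely generated Gabriel topology: it is a filter of ideals with a basis of finitely generated ideals closed under ideal products. -/
namespace PrimeSpectrum

variable {R : Type*} [CommRing R]

def gabrielFilter (X : Set (PrimeSpectrum R)) : Set (Ideal R) :=
  {J | ∃ I : Ideal R, I.FG ∧ I ≤ J ∧ zeroLocus (I : Set R) ⊆ X}

variable {X : Set (PrimeSpectrum R)} {I J : Ideal R}

theorem mem_gabrielFilter_of_fg (hI : I.FG) (hV : zeroLocus (I : Set R) ⊆ X) :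
    I ∈ gabrielFilter X :=
  ⟨I, hI, le_rfl, hV⟩

theorem top_mem_gabrielFilter (X : Set (PrimeSpectrum R)) : ⊤ ∈ gabrielFilter X :=
  mem_gabrielFilter_of_fg ⟨{1}, by simp⟩ (by simp)

theorem gabrielFilter_mono (hI : I ∈ gabrielFilter X) (hIJ : I ≤ J) : J ∈ gabrielFilter X :=
  let ⟨I', hfg, hle, hV⟩ := hI
  ⟨I', hfg, hle.trans hIJ, hV⟩

theorem exists_fg_mem_gabrielFilter_le (hJ : J ∈ gabrielFilter X) :
    ∃ I ∈ gabrielFilter X, I ≤ J ∧ I.FG :=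
  let ⟨I, hfg, hle, hV⟩ := hJ
  ⟨I, mem_gabrielFilter_of_fg hfg hV, hle, hfg⟩

theorem mul_mem_gabrielFilter (hI : I ∈ gabrielFilter X) (hJ : J ∈ gabrielFilter X) :
    I * J ∈ gabrielFilter X := by
  obtain ⟨I', hI'fg, hI'le, hI'V⟩ := hI
  obtain ⟨J', hJ'fg, hJ'le, hJ'V⟩ := hJ
  refine ⟨I' * J', hI'fg.mul hJ'fg, Ideal.mul_mono hI'le hJ'le, ?_⟩
  rw [zeroLocus_mul]
  exact Set.union_subset hI'V hJ'V

theorem inf_mem_gabrielFilter (hI : I ∈ gabrielFilter X) (hJ : J ∈ gabrielFilter X) :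
    I ⊓ J ∈ gabrielFilter X :=
  gabrielFilter_mono (mul_mem_gabrielFilter hI hJ) Ideal.mul_le_inf

end PrimeSpectrum

open PrimeSpectrum in
theorem thomason_set_gives_gabriel_topology_general (R : Type*) [CommRing R]
    (X : Set (PrimeSpectrum R)) :
    (({J : Ideal R | ∃ I : Ideal R, I.FG ∧ I ≤ J ∧
        PrimeSpectrum.zeroLocus (I : Set R) ⊆ X} : Set (Ideal R)).Nonempty) ∧
    (∀ I ∈ {J : Ideal R | ∃ I : Ideal R, I.FG ∧ I ≤ J ∧
        PrimeSpectrum.zeroLocus (I : Set R) ⊆ X}, ∀ J : Ideal R, I ≤ J →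
      J ∈ {J : Ideal R | ∃ I : Ideal R, I.FG ∧ I ≤ J ∧
        PrimeSpectrum.zeroLocus (I : Set R) ⊆ X}) ∧
    (∀ I ∈ {J : Ideal R | ∃ I : Ideal R, I.FG ∧ I ≤ J ∧
        PrimeSpectrum.zeroLocus (I : Set R) ⊆ X},
      ∀ J ∈ {J : Ideal R | ∃ I : Ideal R, I.FG ∧ I ≤ J ∧
        PrimeSpectrum.zeroLocus (I : Set R) ⊆ X},
      I ⊓ J ∈ {J : Ideal R | ∃ I : Ideal R, I.FG ∧ I ≤ J ∧
        PrimeSpectrum.zeroLocus (I : Set R) ⊆ X}) ∧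
    (∀ J ∈ {J : Ideal R | ∃ I : Ideal R, I.FG ∧ I ≤ J ∧
        PrimeSpectrum.zeroLocus (I : Set R) ⊆ X},
      ∃ I ∈ {J : Ideal R | ∃ I : Ideal R, I.FG ∧ I ≤ J ∧
        PrimeSpectrum.zeroLocus (I : Set R) ⊆ X}, I ≤ J ∧ I.FG) ∧
    (∀ I ∈ {J : Ideal R | ∃ I : Ideal R, I.FG ∧ I ≤ J ∧
        PrimeSpectrum.zeroLocus (I : Set R) ⊆ X},
      ∀ J ∈ {J : Ideal R | ∃ I : Ideal R, I.FG ∧ I ≤ J ∧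
        PrimeSpectrum.zeroLocus (I : Set R) ⊆ X},
      I * J ∈ {J : Ideal R | ∃ I : Ideal R, I.FG ∧ I ≤ J ∧
        PrimeSpectrum.zeroLocus (I : Set R) ⊆ X}) :=
  ⟨⟨⊤, top_mem_gabrielFilter X⟩,
    fun _ hI _ hIJ => gabrielFilter_mono hI hIJ,
    fun _ hI _ hJ => inf_mem_gabrielFilter hI hJ,
    fun _ hJ => exists_fg_mem_gabrielFilter_le hJ,
    fun _ hI _ hJ => mul_mem_gabrielFilter hI hJ⟩

/-- Let `R` be a commutative ring and `X` a Thomason subset of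
`Spec R`, i.e. a union of sets `V(I)` with `I` finitely generated.  Then
`G = {J | ∃ f.g. I ⊆ J with V(I) ⊆ X}` is a finitely generated Gabriel
topology: a (nonempty, upward closed, intersection closed) filter of ideals
with a basis of finitely generated ideals that is closed under ideal
products. -/
theorem thomason_set_gives_gabriel_topology (R : Type*) [CommRing R]
    (X : Set (PrimeSpectrum R))
    (hX : ∃ S : Set (Ideal R), (∀ I ∈ S, I.FG) ∧
      X = ⋃ I ∈ S, PrimeSpectrum.zeroLocus (I : Set R)) :
    (({J : Ideal R | ∃ I : Ideal R, I.FG ∧ I ≤ J ∧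
        PrimeSpectrum.zeroLocus (I : Set R) ⊆ X} : Set (Ideal R)).Nonempty) ∧
    (∀ I ∈ {J : Ideal R | ∃ I : Ideal R, I.FG ∧ I ≤ J ∧
        PrimeSpectrum.zeroLocus (I : Set R) ⊆ X}, ∀ J : Ideal R, I ≤ J →
      J ∈ {J : Ideal R | ∃ I : Ideal R, I.FG ∧ I ≤ J ∧
        PrimeSpectrum.zeroLocus (I : Set R) ⊆ X}) ∧
    (∀ I ∈ {J : Ideal R | ∃ I : Ideal R, I.FG ∧ I ≤ J ∧
        PrimeSpectrum.zeroLocus (I : Set R) ⊆ X},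
      ∀ J ∈ {J : Ideal R | ∃ I : Ideal R, I.FG ∧ I ≤ J ∧
        PrimeSpectrum.zeroLocus (I : Set R) ⊆ X},
      I ⊓ J ∈ {J : Ideal R | ∃ I : Ideal R, I.FG ∧ I ≤ J ∧
        PrimeSpectrum.zeroLocus (I : Set R) ⊆ X}) ∧
    (∀ J ∈ {J : Ideal R | ∃ I : Ideal R, I.FG ∧ I ≤ J ∧
        PrimeSpectrum.zeroLocus (I : Set R) ⊆ X},
      ∃ I ∈ {J : Ideal R | ∃ I : Ideal R, I.FG ∧ I ≤ J ∧
        PrimeSpectrum.zeroLocus (I : Set R) ⊆ X}, I ≤ J ∧ I.FG) ∧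
    (∀ I ∈ {J : Ideal R | ∃ I : Ideal R, I.FG ∧ I ≤ J ∧
        PrimeSpectrum.zeroLocus (I : Set R) ⊆ X},
      ∀ J ∈ {J : Ideal R | ∃ I : Ideal R, I.FG ∧ I ≤ J ∧
        PrimeSpectrum.zeroLocus (I : Set R) ⊆ X},
      I * J ∈ {J : Ideal R | ∃ I : Ideal R, I.FG ∧ I ≤ J ∧
        PrimeSpectrum.zeroLocus (I : Set R) ⊆ X}) :=
  thomason_set_gives_gabriel_topology_general R X
end

section
/- Let R be a commutative ring and G, G' two finitely generated Gabriel topologies (filters of ideals with a basis of finitely generated ideals, closed under products). If G and G' contain the same prime ideals, then G = G'. -/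
/-!
If an ideal `I` lies in `G` but not in `G'`, Zorn's lemma yields an ideal `p ⊇ I` maximal
outside `G'`: chains outside `G'` stay outside, because a finitely generated ideal of `G'`
below their union already lies below one member. Membership in a multiplicatively closed
upper set of ideals containing `⊤` is an Oka predicate, since
`(p ⊔ (a)) * (p : a) ≤ p`; so `p` is prime. It lies in `G`, being above `I`, hence in `G'`,
a contradiction.
-/

namespace Ideal

variable {R : Type*} [CommSemiring R]

theorem sup_span_singleton_mul_colon_le (I : Ideal R) (a : R) :
    (I ⊔ span {a}) * I.colon (span {a}) ≤ I := by
  rw [sup_mul, sup_le_iff, span_singleton_mul_le_iff]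
  exact ⟨mul_le_left, fun r hr => mul_comm r a ▸ mem_colon_span_singleton.mp hr⟩

theorem isOka_mem {S : Set (Ideal R)} (htop : ⊤ ∈ S) (hS : IsUpperSet S)
    (hmul : ∀ I ∈ S, ∀ J ∈ S, I * J ∈ S) : IsOka (· ∈ S) where
  top := htop
  oka {I a} hsup hcolon := hS (sup_span_singleton_mul_colon_le I a) (hmul _ hsup _ hcolon)

theorem exists_le_maximal_notMem {S : Set (Ideal R)} (hS : IsUpperSet S)
    (hfg : ∀ I ∈ S, ∃ J ∈ S, J ≤ I ∧ J.FG) {I : Ideal R} (hI : I ∉ S) :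
    ∃ p, I ≤ p ∧ Maximal (· ∉ S) p := by
  refine zorn_le_nonempty₀ {J | J ∉ S}
    (fun C hCS hC K hK => ⟨sSup C, ?_, fun _ => le_sSup⟩) I hI
  intro hsup
  obtain ⟨J, hJS, hJle, hJfg⟩ := hfg _ hsup
  have hJcompact := (Submodule.fg_iff_compact J).mp hJfg
  obtain ⟨L, hLC, hJL⟩ := (CompleteLattice.isCompactElement_iff_le_of_directed_sSup_le _ J).mp
    hJcompact C ⟨K, hK⟩ hC.directedOn hJle
  exact hCS hLC (hS hJL hJS)

theorem subset_of_forall_isPrime {G G' : Set (Ideal R)} (hG : IsUpperSet G)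
    (hG' : IsUpperSet G') (htop' : ⊤ ∈ G') (hmul' : ∀ I ∈ G', ∀ J ∈ G', I * J ∈ G')
    (hfg' : ∀ I ∈ G', ∃ J ∈ G', J ≤ I ∧ J.FG)
    (hprime : ∀ p : Ideal R, p.IsPrime → p ∈ G → p ∈ G') :
    G ⊆ G' := by
  intro I hI
  by_contra hI'
  obtain ⟨p, hIp, hp⟩ := exists_le_maximal_notMem hG' hfg' hI'
  have hp_prime : p.IsPrime := (isOka_mem htop' hG' hmul').isPrime_of_maximal_not hp
  exact hp.prop (hprime p hp_prime (hG hIp hI))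

end Ideal

theorem fg_gabriel_topology_eq_of_same_primes_general {R : Type*} [CommRing R]
    (G G' : Set (Ideal R))
    (hne : G.Nonempty) (hne' : G'.Nonempty)
    (hup : ∀ I ∈ G, ∀ J : Ideal R, I ≤ J → J ∈ G)
    (hup' : ∀ I ∈ G', ∀ J : Ideal R, I ≤ J → J ∈ G')
    (hbasis : ∀ I ∈ G, ∃ J ∈ G, J ≤ I ∧ J.FG)
    (hbasis' : ∀ I ∈ G', ∃ J ∈ G', J ≤ I ∧ J.FG)
    (hmul : ∀ I ∈ G, ∀ J ∈ G, I * J ∈ G)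
    (hmul' : ∀ I ∈ G', ∀ J ∈ G', I * J ∈ G')
    (hprimes : ∀ p : Ideal R, p.IsPrime → (p ∈ G ↔ p ∈ G')) :
    G = G' := by
  have hG : IsUpperSet G := fun _ _ hle hI => hup _ hI _ hle
  have hG' : IsUpperSet G' := fun _ _ hle hI => hup' _ hI _ hle
  obtain ⟨I, hI⟩ := hne
  obtain ⟨I', hI'⟩ := hne'
  refine (Ideal.subset_of_forall_isPrime hG hG' (hG' le_top hI') hmul' hbasis'
    fun p hp => (hprimes p hp).mp).antisymm ?_
  exact Ideal.subset_of_forall_isPrime hG' hG (hG le_top hI) hmul hbasis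
    fun p hp => (hprimes p hp).mpr

/-- Let `R` be a commutative ring and `G`, `G'` two finitely
generated Gabriel topologies (nonempty filters of ideals with a basis of
finitely generated ideals, closed under ideal products).  If `G` and `G'`
contain the same prime ideals, then `G = G'`. -/
theorem fg_gabriel_topology_eq_of_same_primes {R : Type*} [CommRing R]
    (G G' : Set (Ideal R))
    (hne : G.Nonempty) (hne' : G'.Nonempty)
    (hup : ∀ I ∈ G, ∀ J : Ideal R, I ≤ J → J ∈ G)
    (hup' : ∀ I ∈ G', ∀ J : Ideal R, I ≤ J → J ∈ G')
    (hinter : ∀ I ∈ G, ∀ J ∈ G, I ⊓ J ∈ G)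
    (hinter' : ∀ I ∈ G', ∀ J ∈ G', I ⊓ J ∈ G')
    (hbasis : ∀ I ∈ G, ∃ J ∈ G, J ≤ I ∧ J.FG)
    (hbasis' : ∀ I ∈ G', ∃ J ∈ G', J ≤ I ∧ J.FG)
    (hmul : ∀ I ∈ G, ∀ J ∈ G, I * J ∈ G)
    (hmul' : ∀ I ∈ G', ∀ J ∈ G', I * J ∈ G')
    (hprimes : ∀ p : Ideal R, p.IsPrime → (p ∈ G ↔ p ∈ G')) :
    G = G' :=
  fg_gabriel_topology_eq_of_same_primes_general G G' hne hne' hup hup' hbasis hbasis' hmul hmul'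
    hprimes
end
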